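/- Let n, s and k be positive integers with n ≥ 2 and k(s+1) ≤ n - 1, and let π be a permutation of Z_n with the property that for every i ∈ Z_n there is an integer δ_i ∈ {s, s+1, s+2} with π(i+1) ≡ π(i) + δ_i (mod n), and such that among any k-1 consecutive indices i, i+1, ..., i+k-2 at most one value δ equals s+2 and (number of δ's equal to s+2) − (number of δ's equal to s) ≤ 1. Then for all distinct i, j ∈ Z_n with ||i,j||_n < k, one has ||π(i),π(j)||_n ≥ s; that is, π is (k,s)-clash-free. -/

import Mathlib

/-- Circular distance on `ZMod n`: the distance between `i` and `j` when the
elements of `ZMod n` are written in a cycle. -/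
def circDist (n : ℕ) (i j : ZMod n) : ℕ := min (i - j).val (j - i).val

/-- A permutation `π` of `ZMod n` is `(s,k)`-clash-free if there is no pair of
distinct elements at circular distance `< s` mapped to a pair at circular
distance `< k`. -/
def IsClashFree (n s k : ℕ) (π : Equiv.Perm (ZMod n)) : Prop :=
  ∀ i j : ZMod n, i ≠ j → circDist n i j < s → k ≤ circDist n (π i) (π j)

/-!
Walking `d` steps forward from `a`, with `0 < d < k`, moves `π a` forward by
`S = δ a + ⋯ + δ (a + d - 1)`. Every step is at least `s`, and at most `s + 1` except for at most
one step of `s + 2` in the window, so `s ≤ d * s ≤ S ≤ d * (s + 1) + 1 < n - s`. Hence both arcs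
between `π a` and `π (a + d)`, of lengths `S` and `n - S`, have length at least `s`.
-/

open Finset

lemma circDist_comm (n : ℕ) (i j : ZMod n) : circDist n i j = circDist n j i :=
  min_comm _ _

lemma circDist_add_natCast {n S : ℕ} (a : ZMod n) (hSn : S < n) :
    circDist n a (a + S) = min (n - S) S := by
  have : NeZero n := ⟨by omega⟩
  obtain rfl | hS₀ := Nat.eq_zero_or_pos S
  · simp [circDist]
  have hval : (S : ZMod n).val = S := ZMod.val_cast_of_lt hSn
  have hne : (S : ZMod n) ≠ 0 := fun h => by simp [h] at hval; omega
  rw [circDist, sub_add_cancel_left, add_sub_cancel_left, ZMod.neg_val, if_neg hne, hval]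

lemma apply_add_natCast_eq_add_sum {R : Type*} [AddCommMonoidWithOne R] (f : R → R)
    (δ : R → ℕ) (hf : ∀ i, f (i + 1) = f i + δ i) (i : R) (d : ℕ) :
    f (i + d) = f i + ((∑ t ∈ range d, δ (i + t) : ℕ) : R) := by
  induction d with
  | zero => simp
  | succ d ih =>
    rw [Nat.cast_succ, ← add_assoc, hf, ih, sum_range_succ, Nat.cast_add, add_assoc]

lemma sum_le_card_mul_add_card_filter {ι : Type*} (A : Finset ι) (g : ι → ℕ) (s : ℕ)
    (hg : ∀ x ∈ A, g x ≤ s + 2) :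
    ∑ x ∈ A, g x ≤ #A * (s + 1) + #{x ∈ A | g x = s + 2} := by
  calc ∑ x ∈ A, g x ≤ ∑ x ∈ A, ((s + 1) + if g x = s + 2 then 1 else 0) :=
        sum_le_sum fun x hx => by split_ifs <;> have := hg x hx <;> omega
    _ = _ := by rw [sum_add_distrib, sum_boole, sum_const, smul_eq_mul, Nat.cast_id]

lemma exists_natCast_of_circDist_lt {n k : ℕ} [NeZero n] {i j : ZMod n} (hij : i ≠ j)
    (h : circDist n i j < k) :
    ∃ d : ℕ, 0 < d ∧ d < k ∧ (j = i + d ∨ i = j + d) := by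
  rcases min_lt_iff.mp h with h | h
  · exact ⟨(i - j).val, ZMod.val_pos.mpr (sub_ne_zero.mpr hij), h,
      Or.inr (by rw [ZMod.natCast_zmod_val, add_sub_cancel])⟩
  · exact ⟨(j - i).val, ZMod.val_pos.mpr (sub_ne_zero.mpr hij.symm), h,
      Or.inl (by rw [ZMod.natCast_zmod_val, add_sub_cancel])⟩

lemma le_circDist_apply_add_natCast {n s k : ℕ} (hbound : k * (s + 1) ≤ n - 1)
    (f : ZMod n → ZMod n) (δ : ZMod n → ℕ) (hδ : ∀ i, s ≤ δ i ∧ δ i ≤ s + 2)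
    (hf : ∀ i, f (i + 1) = f i + δ i)
    (hfew : ∀ i, #((range (k - 1)).filter fun t : ℕ => δ (i + t) = s + 2) ≤ 1)
    (a : ZMod n) {d : ℕ} (hd₀ : 0 < d) (hdk : d < k) :
    s ≤ circDist n (f a) (f (a + d)) := by
  set S := ∑ t ∈ range d, δ (a + t)
  have hlow : d * s ≤ S := by
    simpa using card_nsmul_le_sum (range d) (fun t => δ (a + t)) s fun t _ => (hδ _).1
  have hfew' : #((range d).filter fun t : ℕ => δ (a + t) = s + 2) ≤ 1 :=
    (card_le_card (filter_subset_filter _ (range_subset_range.mpr (by omega)))).trans (hfew a)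
  have hup : S ≤ d * (s + 1) + 1 := by
    have := sum_le_card_mul_add_card_filter (range d) (fun t => δ (a + t)) s
      fun t _ => (hδ _).2
    rw [card_range] at this
    omega
  have hs : s ≤ S := (Nat.le_mul_of_pos_left s hd₀).trans hlow
  have hSn : S + s < n := by
    have : (d + 1) * (s + 1) ≤ k * (s + 1) := Nat.mul_le_mul_right _ hdk
    rw [add_one_mul] at this
    omega
  rw [apply_add_natCast_eq_add_sum f δ hf, circDist_add_natCast _ (by omega : S < n)]
  omega

theorem stmt19_general (n s k : ℕ)
    (hbound : k * (s + 1) ≤ n - 1)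
    (π : Equiv.Perm (ZMod n)) (δ : ZMod n → ℕ)
    (hδ : ∀ i : ZMod n,
      (δ i = s ∨ δ i = s + 1 ∨ δ i = s + 2) ∧ π (i + 1) = π i + (δ i : ZMod n))
    (hcons : ∀ i : ZMod n,
      ((Finset.range (k - 1)).filter fun t : ℕ => δ (i + (t : ZMod n)) = s + 2).card ≤ 1 ∧
      ((Finset.range (k - 1)).filter fun t : ℕ => δ (i + (t : ZMod n)) = s + 2).card ≤
        ((Finset.range (k - 1)).filter fun t : ℕ => δ (i + (t : ZMod n)) = s).card + 1) :
    ∀ i j : ZMod n, i ≠ j → circDist n i j < k → s ≤ circDist n (π i) (π j) := by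
  intro i j hij hlt
  have : NeZero n := ⟨by have := Nat.mul_pos (by omega : 0 < k) (by omega : 0 < s + 1); omega⟩
  have hwindow (a : ZMod n) {d : ℕ} (hd₀ : 0 < d) (hdk : d < k) :
      s ≤ circDist n (π a) (π (a + d)) :=
    le_circDist_apply_add_natCast hbound π δ
      (fun i => by rcases (hδ i).1 with h | h | h <;> omega) (fun i => (hδ i).2)
      (fun i => (hcons i).1) a hd₀ hdk
  obtain ⟨d, hd₀, hdk, rfl | rfl⟩ := exists_natCast_of_circDist_lt hij hlt
  · exact hwindow i hd₀ hdk
  · rw [circDist_comm]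
    exact hwindow j hd₀ hdk

theorem stmt19 (n s k : ℕ) (hn : 2 ≤ n) (hs : 0 < s) (hk : 0 < k)
    (hbound : k * (s + 1) ≤ n - 1)
    (π : Equiv.Perm (ZMod n)) (δ : ZMod n → ℕ)
    (hδ : ∀ i : ZMod n,
      (δ i = s ∨ δ i = s + 1 ∨ δ i = s + 2) ∧ π (i + 1) = π i + (δ i : ZMod n))
    (hcons : ∀ i : ZMod n,
      ((Finset.range (k - 1)).filter fun t : ℕ => δ (i + (t : ZMod n)) = s + 2).card ≤ 1 ∧
      ((Finset.range (k - 1)).filter fun t : ℕ => δ (i + (t : ZMod n)) = s + 2).card ≤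
        ((Finset.range (k - 1)).filter fun t : ℕ => δ (i + (t : ZMod n)) = s).card + 1) :
    ∀ i j : ZMod n, i ≠ j → circDist n i j < k → s ≤ circDist n (π i) (π j) :=
  stmt19_general n s k hbound π δ hδ hcons
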